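/- Let T ≥ 2, let y_1,…,y_T ∈ ℝ, let γ > 0, λ ≥ 0, and let m be an integer with 1 ≤ m < T. Define C′ = min_{α ≥ 0} { Cost(y_{1:m}, α; γ) + Cost(y_{T:(m+1)}, γα; 1/γ) }, where the first Cost is computed from the data (y_1,…,y_m) with decay γ and the second from the time-reversed data (y_T, y_{T−1}, …, y_{m+1}) with decay 1/γ, evaluated at terminal amplitude γα. Then C′ equals the minimum, over all integers k ≥ 0 and segmentations 0 = τ_0 < τ_1 < … < τ_k < τ_{k+1} = T of {1,…,T} with m ∉ {τ_1,…,τ_k}, of Σ_{j=0}^{k} min_{α ≥ 0} { (1/2) Σ_{t=τ_j+1}^{τ_{j+1}} (y_t − α γ^{t−τ_{j+1}})² } + λk. -/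

import Mathlib

/-!
`Cost(y_{1:s}, α; γ)` is the least objective of a segmentation of `{1, …, s}` whose last segment
has amplitude `α`, since `F` absorbs every changepoint before the last one. A segmentation of
`{1, …, T}` that does not cut at `m` has one segment straddling `m`; cutting it there, with the
decayed amplitude `α` at `m`, splits its objective into that of a segmentation of `y_{1:m}` ending
with amplitude `α` and that of a segmentation of `y_{m+1:T}`. Read backwards from `T`, the latter
is a segmentation of the reversed data with decay `1/γ` whose last amplitude, the one at `m + 1`,
is `γα`. Conversely, two such segmentations glue along `m` into one that avoids `m`. The optimal
amplitude of a segment solves a quadratic problem on `[0, ∞)`, so it is attained and the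
right-hand side is the infimum of the objective over segmentations avoiding `m`.
-/

/-- Segment cost `D(a, b, α) = (1/2) ∑_{t=a+1}^{b} (y_t − α γ^{t−b})²`. -/
noncomputable def segCost (y : ℕ → ℝ) (γ : ℝ) (a b : ℕ) (α : ℝ) : ℝ :=
  (1/2) * ∑ t ∈ Finset.Icc (a+1) b, (y t - α * γ ^ ((t : ℤ) - (b : ℤ)))^2

/-- `τ` is a segmentation of the interval `{a+1,…,b}` with `k` changepoints:
`a = τ 0 < τ 1 < … < τ k < τ (k+1) = b`. -/
def IsSeg (a b k : ℕ) (τ : ℕ → ℕ) : Prop :=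
  τ 0 = a ∧ τ (k+1) = b ∧ ∀ j ≤ k, τ j < τ (j+1)

/-- Changepoint objective with per-segment amplitudes:
`∑_{j=0}^{k} D(τ_j, τ_{j+1}, α_j) + λ k`. -/
noncomputable def objAmp (y : ℕ → ℝ) (γ lam : ℝ) (k : ℕ) (τ : ℕ → ℕ) (α : ℕ → ℝ) : ℝ :=
  (∑ j ∈ Finset.range (k+1), segCost y γ (τ j) (τ (j+1)) (α j)) + lam * k

/-- `F(τ)`: the optimal cost of segmenting the first `τ` data points
(minimum of the changepoint objective over segmentations and nonnegative
amplitudes), with the convention `F(0) = −λ`. -/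
noncomputable def Fval (y : ℕ → ℝ) (γ lam : ℝ) : ℕ → ℝ
  | 0 => -lam
  | s+1 => sInf { c | ∃ (k : ℕ) (τ : ℕ → ℕ) (a : ℕ → ℝ), IsSeg 0 (s+1) k τ ∧
      (∀ j ≤ k, 0 ≤ a j) ∧ c = objAmp y γ lam k τ a }

/-- `Cost(y_{1:s}, α; γ) = min_{0 ≤ τ < s} { F(τ) + D(τ, s, α) + λ }`. -/
noncomputable def Cost (y : ℕ → ℝ) (γ lam : ℝ) (s : ℕ) (α : ℝ) : ℝ :=
  sInf { c | ∃ τ : ℕ, τ < s ∧ c = Fval y γ lam τ + segCost y γ τ s α + lam }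

/-- Optimal segment cost `min_{α ≥ 0} D(a, b, α)`. -/
noncomputable def segMin (y : ℕ → ℝ) (γ : ℝ) (a b : ℕ) : ℝ :=
  sInf { c | ∃ α : ℝ, 0 ≤ α ∧ c = segCost y γ a b α }

/-- Changepoint objective with each segment's amplitude optimized separately:
`∑_{j=0}^{k} min_{α ≥ 0} D(τ_j, τ_{j+1}, α) + λ k`. -/
noncomputable def objOpt (y : ℕ → ℝ) (γ lam : ℝ) (k : ℕ) (τ : ℕ → ℕ) : ℝ :=
  (∑ j ∈ Finset.range (k+1), segMin y γ (τ j) (τ (j+1))) + lam * k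


open Finset Pointwise

section SegCost

variable (y : ℕ → ℝ) (γ : ℝ)

lemma segCost_nonneg (a b : ℕ) (α : ℝ) : 0 ≤ segCost y γ a b α := by
  unfold segCost
  have := sum_nonneg fun t (_ : t ∈ Icc (a + 1) b) => sq_nonneg (y t - α * γ ^ ((t : ℤ) - b))
  positivity

variable {γ}

lemma segCost_split (hγ : γ ≠ 0) {a c b : ℕ} (hac : a ≤ c) (hcb : c ≤ b) (β : ℝ) :
    segCost y γ a b β = segCost y γ a c (β * γ ^ ((c : ℤ) - b)) + segCost y γ c b β := by
  unfold segCost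
  rw [Icc_add_one_left_eq_Ioc, Icc_add_one_left_eq_Ioc, Icc_add_one_left_eq_Ioc,
    ← sum_Ioc_consecutive _ hac hcb, mul_add]
  congr 2
  refine sum_congr rfl fun t _ => ?_
  rw [mul_assoc, ← zpow_add₀ hγ]
  ring_nf

/-- Reading the data backwards from `T` turns decay `1/γ` into decay `γ`; since an amplitude
is measured at the right end of its segment, it is rescaled by `γ ^ (length - 1)`. -/
lemma segCost_reverse {z : ℕ → ℝ} {T : ℕ} (hz : ∀ t, 1 ≤ t → t ≤ T → z t = y (T + 1 - t))
    (hγ : γ ≠ 0) {a b : ℕ} (hbT : b ≤ T) (β : ℝ) :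
    segCost z (1 / γ) a b β = segCost y γ (T - b) (T - a) (β * γ ^ ((b : ℤ) - a - 1)) := by
  unfold segCost
  congr 1
  rw [Icc_add_one_left_eq_Ioc, Icc_add_one_left_eq_Ioc]
  refine sum_nbij' (fun t => T + 1 - t) (fun t => T + 1 - t) ?_ ?_ ?_ ?_ fun t ht => ?_
  any_goals intro t ht; simp only [mem_Ioc] at *; omega
  rw [mem_Ioc] at ht
  rw [hz t (by omega) (by omega), one_div, inv_zpow', mul_assoc, ← zpow_add₀ hγ]
  congr 4
  omega

lemma segCost_eq_quadratic (a b : ℕ) (α : ℝ) :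
    segCost y γ a b α =
      ((∑ t ∈ Icc (a + 1) b, (γ ^ ((t : ℤ) - b)) ^ 2) * α ^ 2
        - 2 * (∑ t ∈ Icc (a + 1) b, y t * γ ^ ((t : ℤ) - b)) * α
        + ∑ t ∈ Icc (a + 1) b, y t ^ 2) / 2 := by
  have h : ∀ t ∈ Icc (a + 1) b, (y t - α * γ ^ ((t : ℤ) - b)) ^ 2 = (γ ^ ((t : ℤ) - b)) ^ 2 * α ^ 2
      - 2 * (y t * γ ^ ((t : ℤ) - b)) * α + y t ^ 2 := fun t _ => by ring
  rw [segCost, sum_congr rfl h, sum_add_distrib, sum_sub_distrib, ← sum_mul, ← sum_mul, ← mul_sum]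
  ring

end SegCost

lemma exists_isMinOn_quadratic {A : ℝ} (hA : 0 < A) (B C : ℝ) :
    ∃ β ∈ Set.Ici (0 : ℝ), IsMinOn (fun α => (A * α ^ 2 - 2 * B * α + C) / 2) (Set.Ici 0) β := by
  rcases le_or_gt B 0 with hB | hB
  · refine ⟨0, Set.mem_Ici.2 le_rfl, isMinOn_iff.2 fun α (hα : 0 ≤ α) => ?_⟩
    nlinarith [mul_nonneg hA.le (sq_nonneg α)]
  · refine ⟨B / A, (div_pos hB hA).le, isMinOn_iff.2 fun α _ => ?_⟩
    have hsq : A * (α - B / A) ^ 2 = A * α ^ 2 - 2 * B * α + B * (B / A) := by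
      field_simp
      ring
    have hmin : A * (B / A) ^ 2 = B * (B / A) := by field_simp
    nlinarith [mul_nonneg hA.le (sq_nonneg (α - B / A))]

lemma segMin_le (y : ℕ → ℝ) (γ : ℝ) (a b : ℕ) {α : ℝ} (hα : 0 ≤ α) :
    segMin y γ a b ≤ segCost y γ a b α :=
  csInf_le ⟨0, by rintro _ ⟨β, -, rfl⟩; exact segCost_nonneg y γ a b β⟩ ⟨α, hα, rfl⟩

lemma segMin_nonneg (y : ℕ → ℝ) (γ : ℝ) (a b : ℕ) : 0 ≤ segMin y γ a b :=
  Real.sInf_nonneg (by rintro _ ⟨β, -, rfl⟩; exact segCost_nonneg y γ a b β)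

lemma exists_segCost_eq_segMin (y : ℕ → ℝ) {γ : ℝ} (hγ : γ ≠ 0) (a b : ℕ) :
    ∃ β, 0 ≤ β ∧ segCost y γ a b β = segMin y γ a b := by
  obtain ⟨β, hβ, hmin⟩ : ∃ β ∈ Set.Ici (0 : ℝ), IsMinOn (segCost y γ a b) (Set.Ici 0) β := by
    rcases le_or_gt b a with hba | hab
    · refine ⟨0, Set.mem_Ici.2 le_rfl, isMinOn_iff.2 fun α _ => ?_⟩
      simp [segCost, Icc_eq_empty_of_lt (Nat.lt_succ_of_le hba)]
    · have hA : 0 < ∑ t ∈ Icc (a + 1) b, (γ ^ ((t : ℤ) - b)) ^ 2 :=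
        sum_pos (fun t _ => by have := zpow_ne_zero ((t : ℤ) - b) hγ; positivity)
          ⟨b, mem_Icc.2 ⟨hab, le_rfl⟩⟩
      rw [show segCost y γ a b = _ from funext (segCost_eq_quadratic y a b)]
      exact exists_isMinOn_quadratic hA _ _
  refine ⟨β, hβ, le_antisymm (le_csInf ⟨_, 0, le_rfl, rfl⟩ ?_) (segMin_le y γ a b hβ)⟩
  rintro _ ⟨α, hα, rfl⟩
  exact isMinOn_iff.1 hmin α hα

/-- Concatenation of a segmentation ending at `m` with one starting at `m`: the two segments
meeting at `m` merge, so `m` is no longer a changepoint. -/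
def segAppend (k₁ : ℕ) (τ₁ τ₂ : ℕ → ℕ) (j : ℕ) : ℕ :=
  if j ≤ k₁ then τ₁ j else τ₂ (j - k₁)

/-- Amplitudes of `segAppend`; the merged segment keeps the amplitude of the right piece. -/
def ampAppend (k₁ : ℕ) (a₁ a₂ : ℕ → ℝ) (j : ℕ) : ℝ :=
  if j < k₁ then a₁ j else a₂ (j - k₁)

def revSeg (T k : ℕ) (τ : ℕ → ℕ) (i : ℕ) : ℕ := T - τ (k + 1 - i)

/-- Amplitudes of `revSeg`, rescaled as in `segCost_reverse`. -/
noncomputable def revAmp (γ : ℝ) (k : ℕ) (τ : ℕ → ℕ) (β : ℕ → ℝ) (i : ℕ) : ℝ :=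
  β (k - i) * γ ^ ((τ (k + 1 - i) : ℤ) - τ (k - i) - 1)

lemma revAmp_nonneg {γ : ℝ} (hγ : 0 < γ) {k : ℕ} {τ : ℕ → ℕ} {β : ℕ → ℝ}
    (hβ : ∀ j ≤ k, 0 ≤ β j) {i : ℕ} : 0 ≤ revAmp γ k τ β i :=
  mul_nonneg (hβ _ (Nat.sub_le k i)) (zpow_pos hγ _).le

namespace IsSeg

variable {a b k : ℕ} {τ : ℕ → ℕ}

lemma strictMonoOn (h : IsSeg a b k τ) : StrictMonoOn τ (Set.Iic (k + 1)) :=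
  strictMonoOn_Iic_of_lt_succ fun j hj => by
    simpa [Order.succ_eq_add_one] using h.2.2 j (Nat.le_of_lt_succ hj)

lemma lt_right (h : IsSeg a b k τ) {j : ℕ} (hj : j ≤ k) : τ j < b :=
  h.2.1 ▸ h.strictMonoOn (Set.mem_Iic.2 (by omega)) (Set.mem_Iic.2 le_rfl) (by omega)

lemma le_right (h : IsSeg a b k τ) {j : ℕ} (hj : j ≤ k + 1) : τ j ≤ b :=
  h.2.1 ▸ h.strictMonoOn.monotoneOn (Set.mem_Iic.2 hj) (Set.mem_Iic.2 le_rfl) hj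

lemma left_lt (h : IsSeg a b k τ) {j : ℕ} (h0 : 0 < j) (hj : j ≤ k + 1) : a < τ j :=
  h.1 ▸ h.strictMonoOn (Set.mem_Iic.2 (Nat.zero_le _)) (Set.mem_Iic.2 hj) h0

lemma single (hab : a < b) : IsSeg a b 0 (fun j => if j = 0 then a else b) :=
  ⟨rfl, rfl, fun j hj => by simpa [Nat.le_zero.1 hj] using hab⟩

lemma init (h : IsSeg a b (k + 1) τ) : IsSeg a (τ (k + 1)) k τ :=
  ⟨h.1, rfl, fun j hj => h.2.2 j (by omega)⟩

lemma snoc (h : IsSeg a b k τ) {s : ℕ} (hbs : b < s) :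
    IsSeg a s (k + 1) (Function.update τ (k + 2) s) := by
  refine ⟨by simp [h.1], by simp, fun j hj => ?_⟩
  rcases hj.lt_or_eq with hj | rfl
  · rw [Function.update_of_ne (by omega), Function.update_of_ne (by omega)]
    exact h.2.2 j (by omega)
  · simpa [h.2.1] using hbs

lemma exists_lt_lt (h : IsSeg a b k τ) {m : ℕ} (ham : a < m) (hmb : m < b)
    (hne : ∀ j, 1 ≤ j → j ≤ k → τ j ≠ m) : ∃ J ≤ k, τ J < m ∧ m < τ (J + 1) := by
  set J := Nat.findGreatest (fun j => τ j < m) k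
  have hJk : J ≤ k := Nat.findGreatest_le k
  refine ⟨J, hJk, Nat.findGreatest_spec (P := fun j => τ j < m) (Nat.zero_le k) (h.1 ▸ ham), ?_⟩
  rcases hJk.lt_or_eq with hJk | hJk
  · have := Nat.findGreatest_is_greatest (P := fun j => τ j < m) (k := J + 1) (by omega) hJk
    have := hne (J + 1) (by omega) hJk
    omega
  · rw [hJk, h.2.1]
    exact hmb

lemma append {m k₁ k₂ : ℕ} {τ₁ τ₂ : ℕ → ℕ} (h₁ : IsSeg a m k₁ τ₁) (h₂ : IsSeg m b k₂ τ₂) :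
    IsSeg a b (k₁ + k₂) (segAppend k₁ τ₁ τ₂) := by
  refine ⟨by simp [segAppend, h₁.1], ?_, fun j hj => ?_⟩
  · rw [segAppend, if_neg (by omega), show k₁ + k₂ + 1 - k₁ = k₂ + 1 by omega, h₂.2.1]
  unfold segAppend
  rcases lt_trichotomy j k₁ with hj' | rfl | hj'
  · rw [if_pos hj'.le, if_pos (show j + 1 ≤ k₁ by omega)]
    exact h₁.2.2 j hj'.le
  · rw [if_pos le_rfl, if_neg (by omega), Nat.add_sub_cancel_left]
    exact (h₁.lt_right le_rfl).trans (h₂.left_lt one_pos (by omega))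
  · rw [if_neg (by omega), if_neg (by omega), show j + 1 - k₁ = j - k₁ + 1 by omega]
    exact h₂.2.2 _ (by omega)

lemma append_ne {m k₁ k₂ : ℕ} {τ₁ τ₂ : ℕ → ℕ} (h₁ : IsSeg a m k₁ τ₁) (h₂ : IsSeg m b k₂ τ₂)
    {j : ℕ} (hj : j ≤ k₁ + k₂) : segAppend k₁ τ₁ τ₂ j ≠ m := by
  unfold segAppend
  split_ifs with hjk
  · exact (h₁.lt_right hjk).ne
  · exact (h₂.left_lt (by omega) (by omega)).ne'

lemma take (h : IsSeg a b k τ) {J m : ℕ} (hJ : J ≤ k) (hm : τ J < m) :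
    IsSeg a m J (Function.update τ (J + 1) m) := by
  refine ⟨by simp [h.1], by simp, fun j hj => ?_⟩
  rcases hj.lt_or_eq with hj | rfl
  · rw [Function.update_of_ne (by omega), Function.update_of_ne (by omega)]
    exact h.2.2 j (by omega)
  · simpa using hm

lemma drop (h : IsSeg a b k τ) {J m : ℕ} (hJ : J ≤ k) (hm : m < τ (J + 1)) :
    IsSeg m b (k - J) (Function.update (fun i => τ (J + i)) 0 m) := by
  refine ⟨by simp, ?_, fun i hi => ?_⟩
  · rw [Function.update_of_ne (by omega), show J + (k - J + 1) = k + 1 by omega, h.2.1]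
  rcases Nat.eq_zero_or_pos i with rfl | hi0
  · simpa using hm
  · rw [Function.update_of_ne (by omega), Function.update_of_ne (by omega)]
    exact h.2.2 _ (by omega)

lemma rev (h : IsSeg a b k τ) {T : ℕ} (hbT : b ≤ T) : IsSeg (T - b) (T - a) k (revSeg T k τ) := by
  refine ⟨by simp [revSeg, h.2.1], by simp [revSeg, h.1], fun i hi => ?_⟩
  have h1 := h.2.2 (k - i) (by omega)
  have h2 := h.le_right (j := k - i + 1) (by omega)
  simp only [revSeg, show k + 1 - (i + 1) = k - i by omega, show k + 1 - i = k - i + 1 by omega]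
  omega

end IsSeg

lemma segAppend_take_drop (k : ℕ) (τ : ℕ → ℕ) (m : ℕ) :
    segAppend k (Function.update τ (k + 1) m) (Function.update (fun i => τ (k + i)) 0 m) = τ := by
  funext j
  unfold segAppend
  split_ifs with hj
  · exact Function.update_of_ne (by omega) _ _
  · rw [Function.update_of_ne (by omega)]
    exact congrArg τ (by omega)

lemma ampAppend_take_drop (k : ℕ) (a : ℕ → ℝ) (α : ℝ) :
    ampAppend k (Function.update a k α) (fun i => a (k + i)) = a := by
  funext j
  unfold ampAppend
  split_ifs with hj
  · exact Function.update_of_ne (by omega) _ _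
  · exact congrArg a (by omega)

section Objective

variable {y : ℕ → ℝ} {γ lam : ℝ} {k : ℕ} {τ : ℕ → ℕ} {a : ℕ → ℝ}

lemma objAmp_nonneg (hlam : 0 ≤ lam) (k : ℕ) (τ : ℕ → ℕ) (a : ℕ → ℝ) :
    0 ≤ objAmp y γ lam k τ a :=
  add_nonneg (sum_nonneg fun _ _ => segCost_nonneg _ _ _ _ _) (by positivity)

lemma objOpt_nonneg (hlam : 0 ≤ lam) (k : ℕ) (τ : ℕ → ℕ) : 0 ≤ objOpt y γ lam k τ :=
  add_nonneg (sum_nonneg fun _ _ => segMin_nonneg _ _ _ _) (by positivity)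

lemma objOpt_le_objAmp (ha : ∀ j ≤ k, 0 ≤ a j) : objOpt y γ lam k τ ≤ objAmp y γ lam k τ a :=
  add_le_add_left (sum_le_sum fun j hj =>
    segMin_le _ _ _ _ (ha j (Nat.lt_succ_iff.1 (mem_range.1 hj)))) _

lemma exists_objAmp_eq_objOpt (hγ : γ ≠ 0) (y : ℕ → ℝ) (lam : ℝ) (k : ℕ) (τ : ℕ → ℕ) :
    ∃ a : ℕ → ℝ, (∀ j, 0 ≤ a j) ∧ objAmp y γ lam k τ a = objOpt y γ lam k τ := by
  choose a ha hmin using fun j => exists_segCost_eq_segMin y hγ (τ j) (τ (j + 1))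
  exact ⟨a, ha, by simp only [objAmp, objOpt, hmin]⟩

lemma objAmp_zero : objAmp y γ lam 0 τ a = segCost y γ (τ 0) (τ 1) (a 0) := by
  simp [objAmp]

lemma objAmp_succ : objAmp y γ lam (k + 1) τ a =
    objAmp y γ lam k τ a + segCost y γ (τ (k + 1)) (τ (k + 2)) (a (k + 1)) + lam := by
  simp only [objAmp, sum_range_succ _ (k + 1)]
  push_cast
  ring

lemma objAmp_snoc {b : ℕ} (h : IsSeg 0 b k τ) (s : ℕ) (α : ℝ) :
    objAmp y γ lam (k + 1) (Function.update τ (k + 2) s) (Function.update a (k + 1) α) =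
      objAmp y γ lam k τ a + segCost y γ b s α + lam := by
  rw [objAmp_succ, Function.update_of_ne (by omega), h.2.1, Function.update_self,
    Function.update_self]
  congr 2
  refine congrArg (· + _) (sum_congr rfl fun j hj => ?_)
  rw [mem_range] at hj
  rw [Function.update_of_ne (by omega), Function.update_of_ne (by omega),
    Function.update_of_ne (by omega)]

lemma objAmp_append {a b m k₁ k₂ : ℕ} {τ₁ τ₂ : ℕ → ℕ} {a₁ a₂ : ℕ → ℝ} (hγ : γ ≠ 0)
    (h₁ : IsSeg a m k₁ τ₁) (h₂ : IsSeg m b k₂ τ₂) (ha : a₁ k₁ = a₂ 0 * γ ^ ((m : ℤ) - τ₂ 1)) :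
    objAmp y γ lam (k₁ + k₂) (segAppend k₁ τ₁ τ₂) (ampAppend k₁ a₁ a₂) =
      objAmp y γ lam k₁ τ₁ a₁ + objAmp y γ lam k₂ τ₂ a₂ := by
  have hmerge : segCost y γ (τ₁ k₁) (τ₂ 1) (a₂ 0) =
      segCost y γ (τ₁ k₁) (τ₁ (k₁ + 1)) (a₁ k₁) + segCost y γ (τ₂ 0) (τ₂ 1) (a₂ 0) := by
    rw [h₁.2.1, h₂.1, ha]
    exact segCost_split y hγ (h₁.lt_right le_rfl).le (h₂.left_lt one_pos (by omega)).le _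
  have hleft : ∀ j ∈ range k₁, segCost y γ (segAppend k₁ τ₁ τ₂ j) (segAppend k₁ τ₁ τ₂ (j + 1))
      (ampAppend k₁ a₁ a₂ j) = segCost y γ (τ₁ j) (τ₁ (j + 1)) (a₁ j) := fun j hj => by
    rw [mem_range] at hj
    simp only [segAppend, ampAppend, if_pos hj.le, if_pos hj, if_pos (show j + 1 ≤ k₁ by omega)]
  have hright : ∀ i ∈ range k₂, segCost y γ (segAppend k₁ τ₁ τ₂ (k₁ + (i + 1)))
      (segAppend k₁ τ₁ τ₂ (k₁ + (i + 1) + 1)) (ampAppend k₁ a₁ a₂ (k₁ + (i + 1))) =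
      segCost y γ (τ₂ (i + 1)) (τ₂ (i + 1 + 1)) (a₂ (i + 1)) := fun i _ => by
    simp only [segAppend, ampAppend, if_neg (show ¬ k₁ + (i + 1) ≤ k₁ by omega),
      if_neg (show ¬ k₁ + (i + 1) + 1 ≤ k₁ by omega), if_neg (show ¬ k₁ + (i + 1) < k₁ by omega),
      show k₁ + (i + 1) + 1 - k₁ = i + 1 + 1 by omega, Nat.add_sub_cancel_left]
  have hmid : segCost y γ (segAppend k₁ τ₁ τ₂ (k₁ + 0)) (segAppend k₁ τ₁ τ₂ (k₁ + 0 + 1))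
      (ampAppend k₁ a₁ a₂ (k₁ + 0)) = segCost y γ (τ₁ k₁) (τ₂ 1) (a₂ 0) := by
    simp [segAppend, ampAppend]
  simp only [objAmp, show k₁ + k₂ + 1 = k₁ + (k₂ + 1) by ring, sum_range_add, sum_range_succ _ k₁,
    sum_range_succ' _ k₂, sum_congr rfl hleft, sum_congr rfl hright, hmid, hmerge]
  push_cast
  ring

lemma objAmp_reverse {z : ℕ → ℝ} {T a b : ℕ} (hz : ∀ t, 1 ≤ t → t ≤ T → z t = y (T + 1 - t))
    (hγ : γ ≠ 0) (h : IsSeg a b k τ) (hbT : b ≤ T) (β : ℕ → ℝ) :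
    objAmp z (1 / γ) lam k τ β = objAmp y γ lam k (revSeg T k τ) (revAmp γ k τ β) := by
  unfold objAmp
  rw [← sum_range_reflect]
  congr 1
  refine sum_congr rfl fun i hi => ?_
  rw [mem_range] at hi
  rw [segCost_reverse y hz hγ ((h.le_right (j := k + 1 - 1 - i + 1) (by omega)).trans hbT)]
  simp only [revSeg, revAmp, show k + 1 - 1 - i = k - i by omega,
    show k + 1 - (i + 1) = k - i by omega, show k - i + 1 = k + 1 - i by omega]

end Objective

section Cost

variable {y : ℕ → ℝ} {γ lam : ℝ}

lemma neg_lam_le_Fval (hlam : 0 ≤ lam) (s : ℕ) : -lam ≤ Fval y γ lam s := by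
  cases s with
  | zero => exact le_rfl
  | succ s =>
    refine le_csInf ⟨_, 0, _, fun _ => 0, IsSeg.single s.succ_pos, fun _ _ => le_rfl, rfl⟩ ?_
    rintro _ ⟨k, τ, a, -, -, rfl⟩
    linarith [objAmp_nonneg (y := y) (γ := γ) hlam k τ a]

lemma Fval_le_objAmp (hlam : 0 ≤ lam) {s k : ℕ} {τ : ℕ → ℕ} {a : ℕ → ℝ}
    (h : IsSeg 0 (s + 1) k τ) (ha : ∀ j ≤ k, 0 ≤ a j) :
    Fval y γ lam (s + 1) ≤ objAmp y γ lam k τ a :=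
  csInf_le ⟨0, by rintro _ ⟨k, τ, a, -, -, rfl⟩; exact objAmp_nonneg hlam k τ a⟩
    ⟨k, τ, a, h, ha, rfl⟩

lemma Fval_add_segCost_add_nonneg (hlam : 0 ≤ lam) (t s : ℕ) (α : ℝ) :
    0 ≤ Fval y γ lam t + segCost y γ t s α + lam := by
  linarith [neg_lam_le_Fval (y := y) (γ := γ) hlam t, segCost_nonneg y γ t s α]

lemma bddBelow_Cost_set (hlam : 0 ≤ lam) (s : ℕ) (α : ℝ) :
    BddBelow {c | ∃ t : ℕ, t < s ∧ c = Fval y γ lam t + segCost y γ t s α + lam} :=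
  ⟨0, by rintro _ ⟨t, -, rfl⟩; exact Fval_add_segCost_add_nonneg hlam t s α⟩

lemma Cost_nonneg (hlam : 0 ≤ lam) (s : ℕ) (α : ℝ) : 0 ≤ Cost y γ lam s α :=
  Real.sInf_nonneg (by rintro _ ⟨t, -, rfl⟩; exact Fval_add_segCost_add_nonneg hlam t s α)

/-- Take `τ = τ k` in the minimum defining `Cost`. -/
lemma Cost_le_objAmp (hlam : 0 ≤ lam) {s k : ℕ} {τ : ℕ → ℕ} {a : ℕ → ℝ} (h : IsSeg 0 s k τ)
    (ha : ∀ j ≤ k, 0 ≤ a j) : Cost y γ lam s (a k) ≤ objAmp y γ lam k τ a := by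
  refine (csInf_le (bddBelow_Cost_set hlam s (a k)) ⟨τ k, h.lt_right le_rfl, rfl⟩).trans ?_
  cases k with
  | zero =>
    rw [objAmp_zero, h.1, h.2.1]
    simp [Fval]
  | succ k =>
    obtain ⟨s', hs'⟩ := Nat.exists_eq_add_of_lt (h.left_lt (j := k + 1) k.succ_pos (by omega))
    have hF := Fval_le_objAmp (y := y) (γ := γ) hlam (hs' ▸ h.init) fun j hj => ha j (by omega)
    rw [objAmp_succ, h.2.1, hs']
    linarith

def lastAmpObjectives (y : ℕ → ℝ) (γ lam : ℝ) (s : ℕ) (α : ℝ) : Set ℝ :=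
  {c | ∃ (k : ℕ) (τ : ℕ → ℕ) (a : ℕ → ℝ), IsSeg 0 s k τ ∧ (∀ j ≤ k, 0 ≤ a j) ∧ a k = α ∧
    c = objAmp y γ lam k τ a}

lemma lastAmpObjectives_nonempty {s : ℕ} (hs : 0 < s) {α : ℝ} (hα : 0 ≤ α) :
    (lastAmpObjectives y γ lam s α).Nonempty :=
  ⟨_, 0, _, fun _ => α, IsSeg.single hs, fun _ _ => hα, rfl, rfl⟩

lemma bddBelow_lastAmpObjectives (hlam : 0 ≤ lam) (s : ℕ) (α : ℝ) :
    BddBelow (lastAmpObjectives y γ lam s α) :=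
  ⟨0, by rintro _ ⟨k, τ, a, -, -, -, rfl⟩; exact objAmp_nonneg hlam k τ a⟩

lemma sInf_lastAmpObjectives_le (hlam : 0 ≤ lam) {α : ℝ} (hα : 0 ≤ α) {t s : ℕ} (hts : t < s) :
    sInf (lastAmpObjectives y γ lam s α) ≤ Fval y γ lam t + segCost y γ t s α + lam := by
  have hbdd := bddBelow_lastAmpObjectives (y := y) (γ := γ) hlam s α
  cases t with
  | zero =>
    refine (csInf_le hbdd ⟨0, _, fun _ => α, IsSeg.single hts, fun _ _ => hα, rfl, rfl⟩).trans_eq ?_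
    simp [objAmp_zero, Fval]
  | succ t =>
    suffices sInf (lastAmpObjectives y γ lam s α) - (segCost y γ (t + 1) s α + lam) ≤
        Fval y γ lam (t + 1) by linarith
    refine le_csInf ⟨_, 0, _, fun _ => 0, IsSeg.single t.succ_pos, fun _ _ => le_rfl, rfl⟩ ?_
    rintro _ ⟨k, σ, b, hσ, hb, rfl⟩
    have hsnoc := csInf_le hbdd ⟨k + 1, _, Function.update b (k + 1) α, hσ.snoc hts,
      fun j hj => ?_, Function.update_self .., rfl⟩
    · rw [objAmp_snoc hσ] at hsnoc
      linarith
    · rcases hj.lt_or_eq with hj | rfl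
      · rw [Function.update_of_ne (by omega)]
        exact hb j (by omega)
      · rwa [Function.update_self]

lemma Cost_eq_sInf_lastAmpObjectives (hlam : 0 ≤ lam) {s : ℕ} (hs : 0 < s) {α : ℝ} (hα : 0 ≤ α) :
    Cost y γ lam s α = sInf (lastAmpObjectives y γ lam s α) :=
  le_antisymm
    (le_csInf (lastAmpObjectives_nonempty hs hα) fun _ ⟨_, _, _, h, ha, hak, hc⟩ =>
      hc ▸ hak ▸ Cost_le_objAmp hlam h ha)
    (le_csInf ⟨_, 0, hs, rfl⟩ fun _ ⟨_, ht, hc⟩ => hc ▸ sInf_lastAmpObjectives_le hlam hα ht)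

end Cost

section CutAndGlue

variable {y : ℕ → ℝ} {γ lam : ℝ} {T m : ℕ}

lemma exists_Cost_add_Cost_reverse_le_objAmp (hγ : 0 < γ) (hlam : 0 ≤ lam) (hm1 : 1 ≤ m)
    (hmT : m < T) {k : ℕ} {τ : ℕ → ℕ} {a : ℕ → ℝ} (h : IsSeg 0 T k τ)
    (hne : ∀ j, 1 ≤ j → j ≤ k → τ j ≠ m) (ha : ∀ j, 0 ≤ a j) :
    ∃ α, 0 ≤ α ∧ Cost y γ lam m α + Cost (fun t => y (T + 1 - t)) (1 / γ) lam (T - m) (γ * α) ≤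
      objAmp y γ lam k τ a := by
  obtain ⟨J, hJk, hJm, hmJ⟩ := h.exists_lt_lt (by omega) hmT hne
  set α := a J * γ ^ ((m : ℤ) - τ (J + 1)) with hαdef
  set τR := Function.update (fun i => τ (J + i)) 0 m
  set aR : ℕ → ℝ := fun i => a (J + i)
  have hα : 0 ≤ α := mul_nonneg (ha J) (zpow_pos hγ _).le
  have haL : ∀ j, 0 ≤ Function.update a J α j := fun j => by
    rw [Function.update_apply]
    split_ifs
    exacts [hα, ha j]
  have hL := h.take hJk hJm
  have hR := h.drop hJk hmJ
  have hsplit : objAmp y γ lam k τ a = objAmp y γ lam J (Function.update τ (J + 1) m)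
      (Function.update a J α) + objAmp y γ lam (k - J) τR aR := by
    rw [← objAmp_append hγ.ne' hL hR (by simp [aR, hαdef]), segAppend_take_drop,
      ampAppend_take_drop, Nat.add_sub_cancel' hJk]
  have hrev := objAmp_reverse (y := fun t => y (T + 1 - t)) (z := y) (lam := lam)
    (fun t _ _ => congrArg y (by omega)) (one_div_ne_zero hγ.ne') hR le_rfl aR
  rw [one_div_one_div] at hrev
  have hlast : revAmp (1 / γ) (k - J) τR aR (k - J) = γ * α := by
    simp only [revAmp, Nat.sub_self, show k - J + 1 - (k - J) = 1 by omega, τR, aR,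
      Function.update_self, Function.update_of_ne one_ne_zero, add_zero, hαdef]
    rw [one_div, inv_zpow', show -((τ (J + 1) : ℤ) - m - 1) = 1 + ((m : ℤ) - τ (J + 1)) by ring,
      zpow_add₀ hγ.ne', zpow_one]
    ring
  refine ⟨α, hα, hsplit ▸ add_le_add ?_ ?_⟩
  · have hCost := Cost_le_objAmp (y := y) (γ := γ) hlam hL fun j _ => haL j
    rwa [Function.update_self] at hCost
  · rw [hrev, ← hlast]
    exact Cost_le_objAmp hlam (by simpa using hR.rev le_rfl) fun j _ =>
      revAmp_nonneg (one_div_pos.2 hγ) fun i _ => ha (J + i)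

lemma exists_objAmp_eq_objAmp_add_objAmp_reverse (hγ : 0 < γ) (hmT : m ≤ T) {k₁ k₂ : ℕ}
    {τ₁ τ₂ : ℕ → ℕ} {a₁ a₂ : ℕ → ℝ} (h₁ : IsSeg 0 m k₁ τ₁) (h₂ : IsSeg 0 (T - m) k₂ τ₂)
    (ha₁ : ∀ j ≤ k₁, 0 ≤ a₁ j) (ha₂ : ∀ j ≤ k₂, 0 ≤ a₂ j) (hlast : a₂ k₂ = γ * a₁ k₁) :
    ∃ k τ a, IsSeg 0 T k τ ∧ (∀ j, 1 ≤ j → j ≤ k → τ j ≠ m) ∧ (∀ j ≤ k, 0 ≤ a j) ∧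
      objAmp y γ lam k τ a =
        objAmp y γ lam k₁ τ₁ a₁ + objAmp (fun t => y (T + 1 - t)) (1 / γ) lam k₂ τ₂ a₂ := by
  have hR : IsSeg m T k₂ (revSeg T k₂ τ₂) := by
    simpa [Nat.sub_sub_self hmT] using h₂.rev (T := T) (by omega)
  have hcompat : a₁ k₁ = revAmp γ k₂ τ₂ a₂ 0 * γ ^ ((m : ℤ) - revSeg T k₂ τ₂ 1) := by
    simp only [revAmp, revSeg, Nat.sub_zero, hlast, h₂.2.1, show k₂ + 1 - 1 = k₂ by omega]
    have hk := h₂.lt_right (j := k₂) le_rfl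
    calc a₁ k₁
        = a₁ k₁ * γ ^ ((1 : ℤ) + (((T - m : ℕ) : ℤ) - τ₂ k₂ - 1) + ((m : ℤ) - (T - τ₂ k₂ : ℕ))) := by
          rw [show (1 : ℤ) + _ + _ = 0 by omega, zpow_zero, mul_one]
      _ = _ := by rw [zpow_add₀ hγ.ne', zpow_add₀ hγ.ne', zpow_one]; ring
  refine ⟨k₁ + k₂, segAppend k₁ τ₁ (revSeg T k₂ τ₂), ampAppend k₁ a₁ (revAmp γ k₂ τ₂ a₂),
    h₁.append hR, fun j _ hj => h₁.append_ne hR hj, fun j hj => ?_, ?_⟩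
  · unfold ampAppend
    split_ifs with hjk
    exacts [ha₁ j hjk.le, revAmp_nonneg hγ ha₂]
  · rw [objAmp_append hγ.ne' h₁ hR hcompat, objAmp_reverse (fun t _ _ => rfl) hγ.ne' h₂ (by omega)]

end CutAndGlue

theorem Cprime_eq_changepoint_without_m_general (T : ℕ) (y : ℕ → ℝ)
    (γ lam : ℝ) (hγ : 0 < γ) (hlam : 0 ≤ lam) (m : ℕ) (hm1 : 1 ≤ m) (hm2 : m < T) :
    sInf { c | ∃ α : ℝ, 0 ≤ α ∧ c = Cost y γ lam m α +
        Cost (fun t => y (T + 1 - t)) (1/γ) lam (T - m) (γ * α) } =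
    sInf { c | ∃ (k : ℕ) (τ : ℕ → ℕ), IsSeg 0 T k τ ∧
        (∀ j, 1 ≤ j → j ≤ k → τ j ≠ m) ∧ c = objOpt y γ lam k τ } := by
  apply le_antisymm
  · refine le_csInf ⟨_, 0, _, IsSeg.single (by omega), fun j h1 h2 => by omega, rfl⟩ ?_
    rintro _ ⟨k, τ, hτ, hne, rfl⟩
    obtain ⟨a, ha, hopt⟩ := exists_objAmp_eq_objOpt hγ.ne' y lam k τ
    obtain ⟨α, hα, hle⟩ := exists_Cost_add_Cost_reverse_le_objAmp hγ hlam hm1 hm2 hτ hne ha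
    refine le_trans (csInf_le ⟨0, ?_⟩ ⟨α, hα, rfl⟩) (hle.trans_eq hopt)
    rintro _ ⟨α', -, rfl⟩
    exact add_nonneg (Cost_nonneg hlam _ _) (Cost_nonneg hlam _ _)
  · refine le_csInf ⟨_, 0, le_rfl, rfl⟩ ?_
    rintro _ ⟨α, hα, rfl⟩
    have hγα : 0 ≤ γ * α := mul_nonneg hγ.le hα
    rw [Cost_eq_sInf_lastAmpObjectives hlam hm1 hα,
      Cost_eq_sInf_lastAmpObjectives hlam (Nat.sub_pos_of_lt hm2) hγα,
      ← csInf_add (lastAmpObjectives_nonempty hm1 hα) (bddBelow_lastAmpObjectives hlam _ _)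
        (lastAmpObjectives_nonempty (Nat.sub_pos_of_lt hm2) hγα)
        (bddBelow_lastAmpObjectives hlam _ _)]
    refine le_csInf ((lastAmpObjectives_nonempty hm1 hα).add
      (lastAmpObjectives_nonempty (Nat.sub_pos_of_lt hm2) hγα)) ?_
    rintro _ ⟨_, ⟨k₁, τ₁, a₁, h₁, ha₁, rfl, rfl⟩, _, ⟨k₂, τ₂, a₂, h₂, ha₂, hlast, rfl⟩, rfl⟩
    obtain ⟨k, τ, a, hτ, hne, ha, heq⟩ :=
      exists_objAmp_eq_objAmp_add_objAmp_reverse hγ hm2.le h₁ h₂ ha₁ ha₂ hlast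
    refine le_trans (csInf_le ⟨0, ?_⟩ ⟨k, τ, hτ, hne, rfl⟩) ((objOpt_le_objAmp ha).trans_eq heq)
    rintro _ ⟨k', τ', -, -, rfl⟩
    exact objOpt_nonneg hlam k' τ'

/-- `C′ = min_{α ≥ 0} { Cost(y_{1:m}, α; γ) + Cost(y_{T:(m+1)}, γα; 1/γ) }`
equals the minimum of the (amplitude-optimized) changepoint objective over segmentations of
`{1,…,T}` whose changepoint set does NOT contain `m`.  The reversed data `y_{T:(m+1)}` has
length `T − m` with entry `t` equal to `y (T + 1 - t)`. -/
theorem Cprime_eq_changepoint_without_m (T : ℕ) (hT : 2 ≤ T) (y : ℕ → ℝ)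
    (γ lam : ℝ) (hγ : 0 < γ) (hlam : 0 ≤ lam) (m : ℕ) (hm1 : 1 ≤ m) (hm2 : m < T) :
    sInf { c | ∃ α : ℝ, 0 ≤ α ∧ c = Cost y γ lam m α +
        Cost (fun t => y (T + 1 - t)) (1/γ) lam (T - m) (γ * α) } =
    sInf { c | ∃ (k : ℕ) (τ : ℕ → ℕ), IsSeg 0 T k τ ∧
        (∀ j, 1 ≤ j → j ≤ k → τ j ≠ m) ∧ c = objOpt y γ lam k τ } :=
  Cprime_eq_changepoint_without_m_general T y γ lam hγ hlam m hm1 hm2
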